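/- arXiv:2605.26878 — 2 statements merged into one kernel-verified Lean document; each statement's English description precedes it below -/
import Mathlib

section
/- Let n ≥ 1. On a probability space, let δ_1,…,δ_n, η_1,…,η_n, ε be real-valued random variables with finite second moments such that E[δ_i] = 0, E[η_i] = 0, E[ε] = 0 for all i, the δ_1,…,δ_n are mutually independent, and the three families (δ_1,…,δ_n), (η_1,…,η_n), ε are mutually independent of one another. Let w_1,…,w_n and u_1,…,u_n be real constants and set R̂ = Σ_{i=1}^n (w_i + η_i)(u_i + δ_i) + ε. Then Var[R̂] = Σ_{i=1}^n w_i² Var[δ_i] + Var[Σ_{i=1}^n η_i u_i] + Var[ε] + Σ_{i=1}^n Var[η_i]·Var[δ_i]. -/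
open MeasureTheory ProbabilityTheory

section Aux

variable {Ω : Type*} [MeasurableSpace Ω] {μ : Measure Ω} [IsProbabilityMeasure μ]

lemma aux_int_mul {f g : Ω → ℝ} (hf : MemLp f 2 μ) (hg : MemLp g 2 μ) :
    Integrable (fun ω => f ω * g ω) μ := by
  have hm := hf.aestronglyMeasurable.mul hg.aestronglyMeasurable
  have hb : Integrable (fun ω => (1/2 : ℝ) * (f ω ^ 2 + g ω ^ 2)) μ :=
    (hf.integrable_sq.add hg.integrable_sq).const_mul (1/2 : ℝ)
  refine Integrable.mono' hb hm ?_
  filter_upwards with ω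
  rw [Real.norm_eq_abs, abs_mul]
  nlinarith [sq_nonneg (|f ω| - |g ω|), sq_abs (f ω), sq_abs (g ω),
    abs_nonneg (f ω), abs_nonneg (g ω)]

lemma aux_memL2_mul {f g : Ω → ℝ} (hf : MemLp f 2 μ) (hg : MemLp g 2 μ)
    (hind : IndepFun f g μ) : MemLp (fun ω => f ω * g ω) 2 μ := by
  rw [memLp_two_iff_integrable_sq (f := fun ω => f ω * g ω)
    (hf.aestronglyMeasurable.mul hg.aestronglyMeasurable)]
  have h : (fun ω => (f ω * g ω) ^ 2) = fun ω => (fun x : ℝ => x ^ 2) (f ω) *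
      (fun x : ℝ => x ^ 2) (g ω) := by funext ω; simp; ring
  rw [h]
  exact (hind.comp (measurable_id.pow_const 2) (measurable_id.pow_const 2)).integrable_mul
    hf.integrable_sq hg.integrable_sq

lemma aux_indep_integral_mul {f g : Ω → ℝ} (h : IndepFun f g μ)
    (hf : AEStronglyMeasurable f μ) (hg : AEStronglyMeasurable g μ) :
    ∫ ω, f ω * g ω ∂μ = (∫ ω, f ω ∂μ) * ∫ ω, g ω ∂μ :=
  h.integral_mul_eq_mul_integral hf hg

lemma aux_var_eq {X : Ω → ℝ} (hX : MemLp X 2 μ) :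
    variance X μ = (∫ ω, X ω ^ 2 ∂μ) - (∫ ω, X ω ∂μ) ^ 2 := by
  rw [variance_eq_sub hX]; rfl

lemma aux_var_add {X Y : Ω → ℝ} (hX : MemLp X 2 μ) (hY : MemLp Y 2 μ)
    (h : ∫ ω, X ω * Y ω ∂μ = (∫ ω, X ω ∂μ) * ∫ ω, Y ω ∂μ) :
    variance (fun ω => X ω + Y ω) μ = variance X μ + variance Y μ := by
  have hXY : Integrable (fun ω => X ω * Y ω) μ := aux_int_mul hX hY
  have hXi := hX.integrable one_le_two
  have hYi := hY.integrable one_le_two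
  have hsum : MemLp (fun ω => X ω + Y ω) 2 μ := hX.add hY
  rw [aux_var_eq hsum, aux_var_eq hX, aux_var_eq hY]
  have e1 : ∫ ω, (X ω + Y ω) ^ 2 ∂μ
      = (∫ ω, X ω ^ 2 ∂μ) + ((∫ ω, Y ω ^ 2 ∂μ) + 2 * ∫ ω, X ω * Y ω ∂μ) := by
    rw [show (fun ω => (X ω + Y ω) ^ 2) = fun ω => X ω ^ 2 + (Y ω ^ 2 + 2 * (X ω * Y ω)) from
      funext fun ω => by ring]
    have i2 : Integrable (fun ω => Y ω ^ 2 + 2 * (X ω * Y ω)) μ :=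
      hY.integrable_sq.add (hXY.const_mul 2)
    rw [integral_add hX.integrable_sq i2,
      integral_add hY.integrable_sq (hXY.const_mul 2), integral_const_mul]
  have e2 : ∫ ω, (X ω + Y ω) ∂μ = (∫ ω, X ω ∂μ) + ∫ ω, Y ω ∂μ := integral_add hXi hYi
  rw [e1, e2, h]; ring

lemma aux_var_const_add (K : ℝ) {g : Ω → ℝ} (hg : MemLp g 2 μ) :
    variance (fun ω => K + g ω) μ = variance g μ := by
  have hgi := hg.integrable one_le_two
  have hsum : MemLp (fun ω => K + g ω) 2 μ := (memLp_const K).add hg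
  rw [aux_var_eq hsum, aux_var_eq hg]
  have e1 : ∫ ω, (K + g ω) ^ 2 ∂μ
      = K ^ 2 + (2 * K * ∫ ω, g ω ∂μ + ∫ ω, g ω ^ 2 ∂μ) := by
    rw [show (fun ω => (K + g ω) ^ 2) = fun ω => K ^ 2 + (2 * K * g ω + g ω ^ 2) from
      funext fun ω => by ring]
    have i2 : Integrable (fun ω => 2 * K * g ω + g ω ^ 2) μ :=
      (hgi.const_mul (2 * K)).add hg.integrable_sq
    rw [integral_add (integrable_const _) i2,
      integral_add (hgi.const_mul (2 * K)) hg.integrable_sq, integral_const_mul,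
      integral_const]
    simp
  have e2 : ∫ ω, (K + g ω) ∂μ = K + ∫ ω, g ω ∂μ := by
    rw [integral_add (integrable_const _) hgi, integral_const]; simp
  rw [e1, e2]; ring

end Aux

/-- **Three-Term Variance Decomposition** (paper's Theorem 1).
For the holistic judge model `R̂ = ∑ i, (wᵢ + ηᵢ)(uᵢ + δᵢ) + ε`, with zero-mean noise,
mutually independent utility-estimation noises `δᵢ`, and the three noise groups
`(δ₁,…,δₙ)`, `(η₁,…,ηₙ)`, `ε` mutually independent of one another,
`Var[R̂] = ∑ i, wᵢ² Var[δᵢ] + Var[∑ i, ηᵢ uᵢ] + Var[ε] + ∑ i, Var[ηᵢ] Var[δᵢ]`. -/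
theorem three_term_variance_decomposition
    {Ω : Type*} [MeasurableSpace Ω] (μ : Measure Ω) [IsProbabilityMeasure μ]
    (n : ℕ) (hn : 1 ≤ n)
    (δ η : Fin n → Ω → ℝ) (ε : Ω → ℝ)
    (hδmeas : ∀ i, Measurable (δ i)) (hηmeas : ∀ i, Measurable (η i))
    (hεmeas : Measurable ε)
    (hδ2 : ∀ i, MemLp (δ i) 2 μ) (hη2 : ∀ i, MemLp (η i) 2 μ)
    (hε2 : MemLp ε 2 μ)
    (hδ0 : ∀ i, ∫ ω, δ i ω ∂μ = 0) (hη0 : ∀ i, ∫ ω, η i ω ∂μ = 0)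
    (hε0 : ∫ ω, ε ω ∂μ = 0)
    (hδindep : iIndepFun δ μ)
    (hfam : iIndep
      ![MeasurableSpace.comap (fun ω => fun i => δ i ω) inferInstance,
        MeasurableSpace.comap (fun ω => fun i => η i ω) inferInstance,
        MeasurableSpace.comap ε inferInstance] μ)
    (w u : Fin n → ℝ) :
    variance (fun ω => (∑ i, (w i + η i ω) * (u i + δ i ω)) + ε ω) μ =
      (∑ i, (w i) ^ 2 * variance (δ i) μ)
        + variance (fun ω => ∑ i, η i ω * u i) μ
        + variance ε μ
        + ∑ i, variance (η i) μ * variance (δ i) μ := by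
  classical
  -- Extract independence of the three families
  let F : ∀ i : Fin 3, Ω → ![Fin n → ℝ, Fin n → ℝ, ℝ] i :=
    Fin.cons (fun ω i => δ i ω) (Fin.cons (fun ω i => η i ω) (Fin.cons ε finZeroElim))
  let mF : ∀ i : Fin 3, MeasurableSpace (![Fin n → ℝ, Fin n → ℝ, ℝ] i) :=
    Fin.cons (MeasurableSpace.pi) (Fin.cons MeasurableSpace.pi
      (Fin.cons Real.measurableSpace finZeroElim))
  have key : (fun i => MeasurableSpace.comap (F i) (mF i)) =
      ![MeasurableSpace.comap (fun ω => fun i => δ i ω) inferInstance,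
        MeasurableSpace.comap (fun ω => fun i => η i ω) inferInstance,
        MeasurableSpace.comap ε inferInstance] := by
    funext i; fin_cases i <;> rfl
  have hF : iIndepFun (m := mF) F μ := by
    show iIndep _ μ
    rw [key]; exact hfam
  have hFmeas : ∀ i, Measurable (F i) := by
    intro i
    fin_cases i
    · exact measurable_pi_lambda _ hδmeas
    · exact measurable_pi_lambda _ hηmeas
    · exact hεmeas
  have hδη : IndepFun (fun ω (i : Fin n) => δ i ω) (fun ω (i : Fin n) => η i ω) μ :=
    hF.indepFun (show (0 : Fin 3) ≠ 1 by decide)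
  have hpε : IndepFun (fun ω => ((fun i : Fin n => δ i ω), (fun i : Fin n => η i ω))) ε μ :=
    hF.indepFun_prodMk hFmeas 0 1 2 (by decide) (by decide)
  -- individual independences
  have hind_δη : ∀ i j, IndepFun (δ i) (η j) μ := fun i j =>
    hδη.comp (measurable_pi_apply i) (measurable_pi_apply j)
  have hind_ηηδδ : ∀ i j k l, IndepFun (fun ω => η i ω * η j ω) (fun ω => δ k ω * δ l ω) μ :=
    fun i j k l => hδη.symm.comp ((measurable_pi_apply i).mul (measurable_pi_apply j))
      ((measurable_pi_apply k).mul (measurable_pi_apply l))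
  have hind_ηδδ : ∀ k i j, IndepFun (η k) (fun ω => δ i ω * δ j ω) μ := fun k i j =>
    hδη.symm.comp (measurable_pi_apply k)
      ((measurable_pi_apply i).mul (measurable_pi_apply j))
  have hind_ηηδ : ∀ i j k, IndepFun (fun ω => η i ω * η j ω) (δ k) μ := fun i j k =>
    hδη.symm.comp ((measurable_pi_apply i).mul (measurable_pi_apply j))
      (measurable_pi_apply k)
  have hind_ηδ : ∀ i j, IndepFun (η i) (δ j) μ := fun i j => (hind_δη j i).symm
  -- integrabilities
  have hδi : ∀ i, Integrable (δ i) μ := fun i => (hδ2 i).integrable one_le_two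
  have hηi : ∀ i, Integrable (η i) μ := fun i => (hη2 i).integrable one_le_two
  have Iδδ : ∀ i j, Integrable (fun ω => δ i ω * δ j ω) μ := fun i j =>
    aux_int_mul (hδ2 i) (hδ2 j)
  have Iηη : ∀ i j, Integrable (fun ω => η i ω * η j ω) μ := fun i j =>
    aux_int_mul (hη2 i) (hη2 j)
  have Iηδ : ∀ i j, Integrable (fun ω => η i ω * δ j ω) μ := fun i j =>
    aux_int_mul (hη2 i) (hδ2 j)
  -- MemLp of the pieces
  have ha2 : MemLp (fun ω => ∑ i, w i * δ i ω) 2 μ :=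
    memLp_finset_sum _ fun i _ => (hδ2 i).const_mul (w i)
  have hb2 : MemLp (fun ω => ∑ i, η i ω * u i) 2 μ := by
    refine memLp_finset_sum _ fun i _ => ?_
    simpa [mul_comm] using (hη2 i).const_mul (u i)
  have hc2 : MemLp (fun ω => ∑ i, η i ω * δ i ω) 2 μ :=
    memLp_finset_sum _ fun i _ => aux_memL2_mul (hη2 i) (hδ2 i) (hind_ηδ i i)
  -- zero means
  have ha0 : ∫ ω, (∑ i, w i * δ i ω) ∂μ = 0 := by
    rw [integral_finset_sum _ fun i _ => (hδi i).const_mul (w i)]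
    refine Finset.sum_eq_zero fun i _ => ?_
    rw [integral_const_mul, hδ0 i, mul_zero]
  have hb0 : ∫ ω, (∑ i, η i ω * u i) ∂μ = 0 := by
    rw [integral_finset_sum _ fun i _ => (hηi i).mul_const (u i)]
    refine Finset.sum_eq_zero fun i _ => ?_
    rw [integral_mul_const, hη0 i, zero_mul]
  have hc0 : ∫ ω, (∑ i, η i ω * δ i ω) ∂μ = 0 := by
    rw [integral_finset_sum _ fun i _ => Iηδ i i]
    refine Finset.sum_eq_zero fun i _ => ?_
    rw [aux_indep_integral_mul (hind_ηδ i i) (hηmeas i).aestronglyMeasurable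
      (hδmeas i).aestronglyMeasurable, hη0 i, zero_mul]
  -- δᵢδⱼ has zero mean for i ≠ j
  have Eδδ0 : ∀ i j, i ≠ j → ∫ ω, δ i ω * δ j ω ∂μ = 0 := by
    intro i j hij
    rw [aux_indep_integral_mul (hδindep.indepFun hij) (hδmeas i).aestronglyMeasurable
      (hδmeas j).aestronglyMeasurable, hδ0 i, zero_mul]
  -- cross terms vanish
  have Eab : ∫ ω, (∑ i, w i * δ i ω) * (∑ i, η i ω * u i) ∂μ = 0 := by
    rw [show (fun ω => (∑ i, w i * δ i ω) * (∑ i, η i ω * u i))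
        = fun ω => ∑ i, ∑ j, (w i * u j) * (δ i ω * η j ω) from funext fun ω => by
      rw [Finset.sum_mul_sum]
      exact Finset.sum_congr rfl fun i _ => Finset.sum_congr rfl fun j _ => by ring]
    rw [integral_finset_sum _ fun i _ => integrable_finset_sum _ fun j _ =>
      (aux_int_mul (hδ2 i) (hη2 j)).const_mul _]
    refine Finset.sum_eq_zero fun i _ => ?_
    rw [integral_finset_sum _ fun j _ => (aux_int_mul (hδ2 i) (hη2 j)).const_mul _]
    refine Finset.sum_eq_zero fun j _ => ?_
    rw [integral_const_mul, aux_indep_integral_mul (hind_δη i j)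
      (hδmeas i).aestronglyMeasurable (hηmeas j).aestronglyMeasurable, hδ0 i, zero_mul, mul_zero]
  have Eac : ∫ ω, (∑ i, w i * δ i ω) * (∑ i, η i ω * δ i ω) ∂μ = 0 := by
    rw [show (fun ω => (∑ i, w i * δ i ω) * (∑ i, η i ω * δ i ω))
        = fun ω => ∑ i, ∑ j, w i * (η j ω * (δ i ω * δ j ω)) from funext fun ω => by
      rw [Finset.sum_mul_sum]
      exact Finset.sum_congr rfl fun i _ => Finset.sum_congr rfl fun j _ => by ring]
    have hint : ∀ i j : Fin n, Integrable (fun ω => η j ω * (δ i ω * δ j ω)) μ := fun i j =>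
      (hind_ηδδ j i j).integrable_mul (hηi j) (Iδδ i j)
    rw [integral_finset_sum _ fun i _ => integrable_finset_sum _ fun j _ =>
      (hint i j).const_mul _]
    refine Finset.sum_eq_zero fun i _ => ?_
    rw [integral_finset_sum _ fun j _ => (hint i j).const_mul _]
    refine Finset.sum_eq_zero fun j _ => ?_
    rw [integral_const_mul, aux_indep_integral_mul (hind_ηδδ j i j)
      (hηmeas j).aestronglyMeasurable ((hδmeas i).mul (hδmeas j)).aestronglyMeasurable,
      hη0 j, zero_mul, mul_zero]
  have Ebc : ∫ ω, (∑ i, η i ω * u i) * (∑ i, η i ω * δ i ω) ∂μ = 0 := by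
    rw [show (fun ω => (∑ i, η i ω * u i) * (∑ i, η i ω * δ i ω))
        = fun ω => ∑ i, ∑ j, u i * ((η i ω * η j ω) * δ j ω) from funext fun ω => by
      rw [Finset.sum_mul_sum]
      exact Finset.sum_congr rfl fun i _ => Finset.sum_congr rfl fun j _ => by ring]
    have hint : ∀ i j : Fin n, Integrable (fun ω => (η i ω * η j ω) * δ j ω) μ := fun i j =>
      (hind_ηηδ i j j).integrable_mul (Iηη i j) (hδi j)
    rw [integral_finset_sum _ fun i _ => integrable_finset_sum _ fun j _ =>
      (hint i j).const_mul _]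
    refine Finset.sum_eq_zero fun i _ => ?_
    rw [integral_finset_sum _ fun j _ => (hint i j).const_mul _]
    refine Finset.sum_eq_zero fun j _ => ?_
    rw [integral_const_mul, aux_indep_integral_mul (hind_ηηδ i j j)
      ((hηmeas i).mul (hηmeas j)).aestronglyMeasurable (hδmeas j).aestronglyMeasurable,
      hδ0 j, mul_zero, mul_zero]
  -- the δ,η part is independent of ε
  have hGε : IndepFun
      (fun ω => ((∑ i, w i * δ i ω) + (∑ i, η i ω * u i)) + ∑ i, η i ω * δ i ω) ε μ := by
    have hg : Measurable (fun p : (Fin n → ℝ) × (Fin n → ℝ) =>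
        ((∑ i, w i * p.1 i) + (∑ i, p.2 i * u i)) + ∑ i, p.2 i * p.1 i) := by
      refine Measurable.add (Measurable.add ?_ ?_) ?_
      · exact Finset.measurable_sum _ fun i _ =>
          Measurable.const_mul (f := fun p : (Fin n → ℝ) × (Fin n → ℝ) => p.1 i)
            ((measurable_pi_apply i).comp measurable_fst) (w i)
      · exact Finset.measurable_sum _ fun i _ =>
          Measurable.mul_const (f := fun p : (Fin n → ℝ) × (Fin n → ℝ) => p.2 i)
            ((measurable_pi_apply i).comp measurable_snd) (u i)
      · exact Finset.measurable_sum _ fun i _ =>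
          (((measurable_pi_apply i).comp measurable_snd).mul
            ((measurable_pi_apply i).comp measurable_fst))
    exact hpε.comp hg measurable_id
  have habc2 : MemLp
      (fun ω => ((∑ i, w i * δ i ω) + (∑ i, η i ω * u i)) + ∑ i, η i ω * δ i ω) 2 μ :=
    (ha2.add hb2).add hc2
  -- step 1: split off ε
  have Eabcε : ∫ ω, (((∑ i, w i * δ i ω) + (∑ i, η i ω * u i)) + ∑ i, η i ω * δ i ω) * ε ω ∂μ
      = (∫ ω, (((∑ i, w i * δ i ω) + (∑ i, η i ω * u i)) + ∑ i, η i ω * δ i ω) ∂μ)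
        * ∫ ω, ε ω ∂μ :=
    aux_indep_integral_mul hGε habc2.aestronglyMeasurable hε2.aestronglyMeasurable
  have step1 := aux_var_add (μ := μ)
    (X := fun ω => ((∑ i, w i * δ i ω) + (∑ i, η i ω * u i)) + ∑ i, η i ω * δ i ω)
    (Y := ε) habc2 hε2 Eabcε
  -- step 2: split off c
  have Eabc : ∫ ω, ((∑ i, w i * δ i ω) + (∑ i, η i ω * u i)) * (∑ i, η i ω * δ i ω) ∂μ
      = (∫ ω, ((∑ i, w i * δ i ω) + (∑ i, η i ω * u i)) ∂μ) * ∫ ω, (∑ i, η i ω * δ i ω) ∂μ := by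
    rw [show (fun ω => ((∑ i, w i * δ i ω) + (∑ i, η i ω * u i)) * (∑ i, η i ω * δ i ω))
        = fun ω => (∑ i, w i * δ i ω) * (∑ i, η i ω * δ i ω)
          + (∑ i, η i ω * u i) * (∑ i, η i ω * δ i ω) from funext fun ω => by ring]
    have i1 : Integrable (fun ω => (∑ i, w i * δ i ω) * (∑ i, η i ω * δ i ω)) μ :=
      aux_int_mul ha2 hc2
    have i2 : Integrable (fun ω => (∑ i, η i ω * u i) * (∑ i, η i ω * δ i ω)) μ :=
      aux_int_mul hb2 hc2
    rw [integral_add i1 i2, Eac, Ebc, hc0, mul_zero]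
    norm_num
  have step2 := aux_var_add (μ := μ)
    (X := fun ω => (∑ i, w i * δ i ω) + (∑ i, η i ω * u i))
    (Y := fun ω => ∑ i, η i ω * δ i ω) (ha2.add hb2) hc2 Eabc
  -- step 3: split a and b
  have Eab' : ∫ ω, (∑ i, w i * δ i ω) * (∑ i, η i ω * u i) ∂μ
      = (∫ ω, (∑ i, w i * δ i ω) ∂μ) * ∫ ω, (∑ i, η i ω * u i) ∂μ := by
    rw [Eab, ha0, zero_mul]
  have step3 := aux_var_add (μ := μ)
    (X := fun ω => ∑ i, w i * δ i ω) (Y := fun ω => ∑ i, η i ω * u i) ha2 hb2 Eab'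
  -- variance of a
  have hVa : variance (fun ω => ∑ i, w i * δ i ω) μ = ∑ i, w i ^ 2 * variance (δ i) μ := by
    have ea : (fun ω => ∑ i, w i * δ i ω) = ∑ i, (fun ω => w i * δ i ω) := by
      funext ω; simp [Finset.sum_apply]
    rw [ea, IndepFun.variance_sum (fun i _ => (hδ2 i).const_mul (w i))
      (fun i _ j _ hij => (hδindep.indepFun hij).comp
        (measurable_id.const_mul (w i)) (measurable_id.const_mul (w j)))]
    exact Finset.sum_congr rfl fun i _ => variance_const_mul (w i) (δ i) μ
  -- variance of c
  have hVc : variance (fun ω => ∑ i, η i ω * δ i ω) μ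
      = ∑ i, variance (η i) μ * variance (δ i) μ := by
    rw [aux_var_eq hc2, hc0]
    have hsq : (fun ω => (∑ i, η i ω * δ i ω) ^ 2)
        = fun ω => ∑ i, ∑ j, (η i ω * η j ω) * (δ i ω * δ j ω) := by
      funext ω
      rw [pow_two, Finset.sum_mul_sum]
      exact Finset.sum_congr rfl fun i _ => Finset.sum_congr rfl fun j _ => by ring
    have hint : ∀ i j : Fin n, Integrable (fun ω => (η i ω * η j ω) * (δ i ω * δ j ω)) μ :=
      fun i j => (hind_ηηδδ i j i j).integrable_mul (Iηη i j) (Iδδ i j)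
    rw [hsq, integral_finset_sum _ fun i _ => integrable_finset_sum _ fun j _ => hint i j]
    have : ∀ i : Fin n, ∫ ω, (∑ j, (η i ω * η j ω) * (δ i ω * δ j ω)) ∂μ
        = variance (η i) μ * variance (δ i) μ := by
      intro i
      rw [integral_finset_sum _ fun j _ => hint i j]
      rw [Finset.sum_eq_single i]
      · rw [aux_indep_integral_mul (hind_ηηδδ i i i i)
          ((hηmeas i).mul (hηmeas i)).aestronglyMeasurable
          ((hδmeas i).mul (hδmeas i)).aestronglyMeasurable]
        rw [aux_var_eq (hη2 i), aux_var_eq (hδ2 i), hη0 i, hδ0 i]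
        have e1 : ∫ ω, η i ω * η i ω ∂μ = ∫ ω, η i ω ^ 2 ∂μ := by
          congr 1; funext ω; ring
        have e2 : ∫ ω, δ i ω * δ i ω ∂μ = ∫ ω, δ i ω ^ 2 ∂μ := by
          congr 1; funext ω; ring
        rw [e1, e2]; ring
      · intro j _ hji
        rw [aux_indep_integral_mul (hind_ηηδδ i j i j)
          ((hηmeas i).mul (hηmeas j)).aestronglyMeasurable
          ((hδmeas i).mul (hδmeas j)).aestronglyMeasurable,
          Eδδ0 i j (Ne.symm hji), mul_zero]
      · intro hi; exact absurd (Finset.mem_univ i) hi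
    rw [Finset.sum_congr rfl fun i _ => this i]
    ring_nf
  -- assemble
  have hfun : (fun ω => (∑ i, (w i + η i ω) * (u i + δ i ω)) + ε ω)
      = fun ω => (∑ i, w i * u i) +
        ((((∑ i, w i * δ i ω) + (∑ i, η i ω * u i)) + ∑ i, η i ω * δ i ω) + ε ω) := by
    funext ω
    have : ∑ i, (w i + η i ω) * (u i + δ i ω)
        = ∑ i, (w i * u i + (w i * δ i ω + (η i ω * u i + η i ω * δ i ω))) :=
      Finset.sum_congr rfl fun i _ => by ring
    rw [this, Finset.sum_add_distrib, Finset.sum_add_distrib, Finset.sum_add_distrib]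
    ring
  have habcε2 : MemLp (fun ω =>
      (((∑ i, w i * δ i ω) + (∑ i, η i ω * u i)) + ∑ i, η i ω * δ i ω) + ε ω) 2 μ :=
    habc2.add hε2
  rw [hfun, aux_var_const_add _ habcε2, step1, step2, step3, hVa, hVc]
  ring
end

section
/- Let n ≥ 2. On a probability space, let η_1,…,η_n be real-valued square-integrable random variables with E[η_i] = 0 for all i, Σ_{i=1}^n η_i = 0 almost surely, Var[η_i] = σ_η² for all i with σ_η² > 0, and Cov(η_i, η_j) = c for all i ≠ j (a common off-diagonal covariance). Let u_1,…,u_n be real constants that are not all equal. Then Var[Σ_{i=1}^n η_i u_i] > 0. -/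
open MeasureTheory ProbabilityTheory

/-- Covariance of two real-valued random variables:
`Cov(X,Y) = E[(X − E[X])(Y − E[Y])]`. -/
noncomputable def cov {Ω : Type*} [MeasurableSpace Ω] (μ : Measure Ω) (X Y : Ω → ℝ) : ℝ :=
  ∫ ω, (X ω - ∫ ω', X ω' ∂μ) * (Y ω - ∫ ω', Y ω' ∂μ) ∂μ

/-- **Irreducibility of Term II** (paper's Appendix B.3): under symmetric (exchangeable)
zero-sum weight noise with `σ_η² > 0`, any non-constant utility vector `u` yields a
strictly positive aggregation-noise variance `Var[∑ i, ηᵢ uᵢ] > 0`. -/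
theorem termII_irreducibility
    {Ω : Type*} [MeasurableSpace Ω] (μ : Measure Ω) [IsProbabilityMeasure μ]
    (n : ℕ) (hn : 2 ≤ n)
    (η : Fin n → Ω → ℝ)
    (hηmeas : ∀ i, Measurable (η i)) (hη2 : ∀ i, MemLp (η i) 2 μ)
    (hη0 : ∀ i, ∫ ω, η i ω ∂μ = 0)
    (hsum : ∀ᵐ ω ∂μ, (∑ i, η i ω) = 0)
    (σsq : ℝ) (hσ : 0 < σsq) (hvar : ∀ i, variance (η i) μ = σsq)
    (c : ℝ) (hcov : ∀ i j, i ≠ j → cov μ (η i) (η j) = c)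
    (u : Fin n → ℝ) (hu : ¬ ∀ i j, u i = u j) :
    0 < variance (fun ω => ∑ i, η i ω * u i) μ := by
  classical
  set S : ℝ := ∑ i, u i with hS
  set Q : ℝ := ∑ i, u i ^ 2 with hQ
  -- integrability of products
  have hint : ∀ i j, Integrable (fun ω => η i ω * η j ω) μ := by
    intro i j
    have h : MemLp (η i • η j) 1 μ :=
      (hη2 j).smul (hη2 i) (p := 2) (q := 2) (r := 1)
    exact memLp_one_iff_integrable.mp h
  -- the second moments
  set m : Fin n → Fin n → ℝ := fun i j => ∫ ω, η i ω * η j ω ∂μ with hm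
  have hmii : ∀ i, m i i = σsq := by
    intro i
    have h := variance_eq_sub (hη2 i)
    rw [hvar i] at h
    have h2 : (∫ ω, η i ω ^ 2 ∂μ) = m i i := by
      simp [hm, sq]
    simp only [Pi.pow_apply] at h
    rw [h, hη0 i, h2]
    ring
  have hmij : ∀ i j, i ≠ j → m i j = c := by
    intro i j hij
    have h := hcov i j hij
    rw [cov, ] at h
    simp only [hη0, sub_zero] at h
    exact h
  -- row sums vanish
  have hrow : ∀ i, ∑ j, m i j = 0 := by
    intro i
    have h1 : ∑ j, m i j = ∫ ω, ∑ j, η i ω * η j ω ∂μ :=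
      (integral_finset_sum _ fun j _ => hint i j).symm
    rw [h1]
    have h2 : (fun ω => ∑ j, η i ω * η j ω) =ᵐ[μ] fun _ => (0 : ℝ) := by
      filter_upwards [hsum] with ω hω
      rw [← Finset.mul_sum, hω, mul_zero]
    rw [integral_congr_ae h2, integral_zero]
  -- consequence: σsq + (n-1) c = 0
  have hnr : (1 : ℝ) ≤ (n : ℝ) - 1 := by
    have : (2 : ℝ) ≤ (n : ℝ) := by exact_mod_cast hn
    linarith
  have hc : σsq + ((n : ℝ) - 1) * c = 0 := by
    obtain ⟨i⟩ : Nonempty (Fin n) := ⟨⟨0, by omega⟩⟩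
    have h1 := hrow i
    rw [← Finset.add_sum_erase Finset.univ (m i) (Finset.mem_univ i)] at h1
    have h2 : ∑ j ∈ Finset.univ.erase i, m i j
        = ∑ j ∈ Finset.univ.erase i, c := by
      refine Finset.sum_congr rfl fun j hj => ?_
      exact hmij i j (Ne.symm (Finset.ne_of_mem_erase hj))
    rw [h2, Finset.sum_const, Finset.card_erase_of_mem (Finset.mem_univ i),
      Finset.card_univ, Fintype.card_fin, nsmul_eq_mul, hmii i] at h1
    have hcast : ((n - 1 : ℕ) : ℝ) = (n : ℝ) - 1 := by
      have : 1 ≤ n := by omega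
      push_cast [this]; ring
    rw [hcast] at h1
    exact h1
  -- the aggregate
  set Y : Ω → ℝ := fun ω => ∑ i, η i ω * u i with hY
  have hY2 : MemLp Y 2 μ := by
    have h := memLp_finset_sum (μ := μ) Finset.univ
      (fun i (_ : i ∈ Finset.univ) => (hη2 i).const_mul (u i))
    have heq : Y = fun ω => ∑ i, u i * η i ω := by
      funext ω
      exact Finset.sum_congr rfl fun i _ => mul_comm _ _
    rwa [heq]
  have hYint : ∀ i, Integrable (fun ω => η i ω * u i) μ := fun i =>
    ((hη2 i).integrable one_le_two).mul_const (u i)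
  have hYmean : ∫ ω, Y ω ∂μ = 0 := by
    rw [hY]
    rw [integral_finset_sum _ fun i _ => hYint i]
    simp [integral_mul_const, hη0]
  -- variance Y = ∫ Y²
  have hvarY : variance Y μ = ∫ ω, Y ω ^ 2 ∂μ := by
    have h := variance_eq_sub hY2
    simp only [Pi.pow_apply] at h
    rw [h, hYmean]
    ring
  -- expand ∫ Y²
  have hexp : (∫ ω, Y ω ^ 2 ∂μ) = ∑ i, ∑ j, m i j * (u i * u j) := by
    have hfun : (fun ω => Y ω ^ 2)
        = fun ω => ∑ i, ∑ j, (η i ω * η j ω) * (u i * u j) := by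
      funext ω
      rw [hY, sq, Finset.sum_mul_sum]
      exact Finset.sum_congr rfl fun i _ => Finset.sum_congr rfl fun j _ => by ring
    rw [hfun]
    rw [integral_finset_sum _ fun i _ =>
      integrable_finset_sum _ fun j _ => (hint i j).mul_const _]
    refine Finset.sum_congr rfl fun i _ => ?_
    rw [integral_finset_sum _ fun j _ => (hint i j).mul_const _]
    exact Finset.sum_congr rfl fun j _ => integral_mul_const _ _
  -- evaluate the double sum
  have hval : ∑ i, ∑ j, m i j * (u i * u j) = σsq * Q - c * Q + c * S ^ 2 := by
    have hinner : ∀ i, ∑ j, m i j * (u i * u j)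
        = σsq * u i ^ 2 + c * (u i * (S - u i)) := by
      intro i
      rw [← Finset.add_sum_erase Finset.univ _ (Finset.mem_univ i)]
      have h2 : ∑ j ∈ Finset.univ.erase i, m i j * (u i * u j)
          = ∑ j ∈ Finset.univ.erase i, c * u i * u j := by
        refine Finset.sum_congr rfl fun j hj => ?_
        rw [hmij i j (Ne.symm (Finset.ne_of_mem_erase hj))]; ring
      rw [h2, ← Finset.mul_sum, Finset.sum_erase_eq_sub (Finset.mem_univ i),
        hmii i, ← hS]
      ring
    simp_rw [hinner]
    rw [Finset.sum_add_distrib, ← Finset.mul_sum, ← Finset.mul_sum, ← hQ]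
    have h3 : ∑ i, u i * (S - u i) = S ^ 2 - Q := by
      have : ∀ i, u i * (S - u i) = u i * S - u i ^ 2 := fun i => by ring
      simp_rw [this]
      rw [Finset.sum_sub_distrib, ← Finset.sum_mul, ← hS, ← hQ]
      ring
    rw [h3]; ring
  -- positivity of n Q - S²
  have hid : ∑ i, ∑ j, (u i - u j) ^ 2 = 2 * ((n : ℝ) * Q - S ^ 2) := by
    have hinner : ∀ i, ∑ j, (u i - u j) ^ 2
        = (n : ℝ) * u i ^ 2 - 2 * u i * S + Q := by
      intro i
      have : ∀ j, (u i - u j) ^ 2 = u i ^ 2 - 2 * u i * u j + u j ^ 2 :=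
        fun j => by ring
      simp_rw [this]
      rw [Finset.sum_add_distrib, Finset.sum_sub_distrib, Finset.sum_const,
        Finset.card_univ, Fintype.card_fin, nsmul_eq_mul]
      have h4 : ∑ j, 2 * u i * u j = 2 * u i * S := by
        rw [← Finset.mul_sum, ← hS]
      rw [h4, ← hQ]
    simp_rw [hinner]
    rw [Finset.sum_add_distrib, Finset.sum_sub_distrib, ← Finset.mul_sum, ← hQ,
      Finset.sum_const, Finset.card_univ, Fintype.card_fin, nsmul_eq_mul]
    have : ∑ i, 2 * u i * S = 2 * S * S := by
      rw [← Finset.sum_mul, ← Finset.mul_sum, ← hS]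
    rw [this]; ring
  have hpos : 0 < (n : ℝ) * Q - S ^ 2 := by
    push_neg at hu
    obtain ⟨i, j, hij⟩ := hu
    have h1 : 0 < ∑ i, ∑ j, (u i - u j) ^ 2 := by
      refine Finset.sum_pos' (fun i _ => Finset.sum_nonneg fun j _ => sq_nonneg _)
        ⟨i, Finset.mem_univ i, ?_⟩
      refine Finset.sum_pos' (fun j _ => sq_nonneg _) ⟨j, Finset.mem_univ j, ?_⟩
      have : u i - u j ≠ 0 := sub_ne_zero_of_ne hij
      positivity
    rw [hid] at h1
    linarith
  -- conclude
  have hn1 : (0 : ℝ) < (n : ℝ) - 1 := by linarith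
  have hc' : c = -σsq / ((n : ℝ) - 1) := by
    field_simp
    linarith
  have hfinal : σsq * Q - c * Q + c * S ^ 2
      = σsq / ((n : ℝ) - 1) * ((n : ℝ) * Q - S ^ 2) := by
    rw [hc']
    field_simp
    ring
  rw [hvarY, hexp, hval, hfinal]
  exact mul_pos (div_pos hσ hn1) hpos
end
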